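/- Let n ≥ 1 and let x, y : Fin n → ℝ take values in {0, 1}, with both x and y non-constant (so SST(x) > 0 and SST(y) > 0). Let r denote the sample Pearson correlation of x and y (the φ coefficient). Then the minimum over all functions f : ℝ → ℝ that are either non-decreasing or non-increasing of SSE(f) = ∑_{r} (y r − f (x r))² equals (1 − r²) · SST(y); equivalently, for dichotomous items the best monotone-direction isotonic R² equals the squared φ coefficient: max(R²_iso in the non-decreasing direction, R²_iso in the non-increasing direction) = r². -/

import Mathlib

/-! For 0/1-valued `x`, every `f : ℝ → ℝ` agrees on the data with the affine function through
`(0, f 0)` and `(1, f 1)`, so the least SSE over arbitrary predictors is the least-squares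
residual `sst y - sxy x y ^ 2 / sst x = (1 - r²) sst y`. The least-squares line attaining it has
slope of the sign of `sxy x y`, hence is monotone in one of the two directions. -/

/-- Sum of squared errors of predictor `f` for regressing `y` on `x`. -/
noncomputable def sse {n : ℕ} (x y : Fin n → ℝ) (f : ℝ → ℝ) : ℝ :=
  ∑ r, (y r - f (x r)) ^ 2

/-- Mean of a data vector. -/
noncomputable def mean {n : ℕ} (y : Fin n → ℝ) : ℝ := (1 / n) * ∑ r, y r

/-- Total sum of squares of a data vector. -/
noncomputable def sst {n : ℕ} (y : Fin n → ℝ) : ℝ := ∑ r, (y r - mean y) ^ 2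

/-- Sample Pearson correlation (the φ coefficient for dichotomous items). -/
noncomputable def pearson {n : ℕ} (x y : Fin n → ℝ) : ℝ :=
  (∑ r, (x r - mean x) * (y r - mean y)) / Real.sqrt (sst x * sst y)

section InfimumOfValues

variable {α : Type*} {g : α → ℝ} {P : α → Prop} {m : ℝ}

lemma le_sInf_values_of_forall_le (hle : ∀ a, m ≤ g a) {a₀ : α} (ha₀ : P a₀) :
    m ≤ sInf {e | ∃ a, P a ∧ e = g a} :=
  le_csInf ⟨_, a₀, ha₀, rfl⟩ (by rintro _ ⟨a, -, rfl⟩; exact hle a)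

lemma sInf_values_eq_of_forall_le (hle : ∀ a, m ≤ g a) {a₀ : α} (ha₀ : P a₀) (hm : g a₀ = m) :
    sInf {e | ∃ a, P a ∧ e = g a} = m :=
  IsLeast.csInf_eq ⟨⟨a₀, ha₀, hm.symm⟩, by rintro _ ⟨a, -, rfl⟩; exact hle a⟩

end InfimumOfValues

section LeastSquares

variable {n : ℕ}

noncomputable def sxy (x y : Fin n → ℝ) : ℝ := ∑ r, (x r - mean x) * (y r - mean y)

noncomputable def olsSlope (x y : Fin n → ℝ) : ℝ := sxy x y / sst x

noncomputable def olsLine (x y : Fin n → ℝ) (t : ℝ) : ℝ :=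
  (mean y - olsSlope x y * mean x) + olsSlope x y * t

lemma sum_eq_mul_mean (y : Fin n → ℝ) : ∑ r, y r = n * mean y := by
  rcases Nat.eq_zero_or_pos n with rfl | hn
  · simp
  · rw [mean]
    field_simp

lemma sst_nonneg (y : Fin n → ℝ) : 0 ≤ sst y :=
  Finset.sum_nonneg fun _ _ => sq_nonneg _

lemma sst_pos {y : Fin n → ℝ} (h : ∃ r s, y r ≠ y s) : 0 < sst y := by
  obtain ⟨r, s, hrs⟩ := h
  refine (sst_nonneg y).lt_of_ne fun h0 => hrs ?_
  have hdev := (Finset.sum_eq_zero_iff_of_nonneg fun i _ => sq_nonneg (y i - mean y)).mp h0.symm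
  have hr := hdev r (Finset.mem_univ r)
  have hs := hdev s (Finset.mem_univ s)
  rw [sq_eq_zero_iff, sub_eq_zero] at hr hs
  rw [hr, hs]

lemma sse_affine (x y : Fin n → ℝ) (a b : ℝ) :
    sse x y (fun t => a + b * t) =
      sst y - 2 * b * sxy x y + b ^ 2 * sst x + n * (a + b * mean x - mean y) ^ 2 := by
  set c := a + b * mean x - mean y
  calc sse x y (fun t => a + b * t)
      = ∑ r, ((y r - mean y) ^ 2 - 2 * b * ((x r - mean x) * (y r - mean y))
          + b ^ 2 * (x r - mean x) ^ 2 - 2 * c * (y r - mean y) + 2 * b * c * (x r - mean x)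
          + c ^ 2) := Finset.sum_congr rfl fun r _ => by ring
    _ = _ := by
      simp only [Finset.sum_add_distrib, Finset.sum_sub_distrib, ← Finset.mul_sum,
        Finset.sum_const, Finset.card_univ, Fintype.card_fin, nsmul_eq_mul, sum_eq_mul_mean x,
        sum_eq_mul_mean y]
      unfold sst sxy
      ring

lemma sst_sub_sxy_sq_div_le_sse_affine {x : Fin n → ℝ} (y : Fin n → ℝ) (hx : 0 < sst x)
    (a b : ℝ) : sst y - sxy x y ^ 2 / sst x ≤ sse x y (fun t => a + b * t) := by
  rw [sse_affine]
  have hsq : 0 ≤ (b * sst x - sxy x y) ^ 2 / sst x := by positivity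
  have hid : (b * sst x - sxy x y) ^ 2 / sst x
      = b ^ 2 * sst x - 2 * b * sxy x y + sxy x y ^ 2 / sst x := by
    field_simp
    ring
  have hintercept : 0 ≤ n * (a + b * mean x - mean y) ^ 2 := by positivity
  linarith

lemma sse_olsLine {x : Fin n → ℝ} (y : Fin n → ℝ) (hx : 0 < sst x) :
    sse x y (olsLine x y) = sst y - sxy x y ^ 2 / sst x := by
  rw [show olsLine x y = fun t => (mean y - olsSlope x y * mean x) + olsSlope x y * t from rfl,
    sse_affine, olsSlope]
  field_simp
  ring

lemma monotone_olsLine {x y : Fin n → ℝ} (h : 0 ≤ olsSlope x y) : Monotone (olsLine x y) :=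
  fun _ _ hst => add_le_add_right (mul_le_mul_of_nonneg_left hst h) _

lemma antitone_olsLine {x y : Fin n → ℝ} (h : olsSlope x y ≤ 0) : Antitone (olsLine x y) :=
  fun _ _ hst => add_le_add_right (mul_le_mul_of_nonpos_left hst h) _

lemma one_sub_pearson_sq_mul_sst {x y : Fin n → ℝ} (hx : 0 < sst x) (hy : 0 < sst y) :
    (1 - pearson x y ^ 2) * sst y = sst y - sxy x y ^ 2 / sst x := by
  rw [pearson, div_pow, Real.sq_sqrt (mul_pos hx hy).le, ← sxy]
  field_simp

end LeastSquares

lemma sse_eq_sse_affine_of_binary {n : ℕ} {x : Fin n → ℝ} (hx : ∀ r, x r = 0 ∨ x r = 1)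
    (y : Fin n → ℝ) (f : ℝ → ℝ) : sse x y f = sse x y (fun t => f 0 + (f 1 - f 0) * t) :=
  Finset.sum_congr rfl fun r _ => by rcases hx r with h | h <;> simp [h]

theorem dichotomous_isoR2_eq_phi_sq_general (n : ℕ) (x y : Fin n → ℝ)
    (hx01 : ∀ r, x r = 0 ∨ x r = 1)
    (hxnc : ∃ r s, x r ≠ x s) (hync : ∃ r s, y r ≠ y s) :
    sInf {e : ℝ | ∃ f : ℝ → ℝ, (Monotone f ∨ Antitone f) ∧ e = sse x y f} =
        (1 - pearson x y ^ 2) * sst y ∧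
      max (1 - sInf {e : ℝ | ∃ f : ℝ → ℝ, Monotone f ∧ e = sse x y f} / sst y)
          (1 - sInf {e : ℝ | ∃ f : ℝ → ℝ, Antitone f ∧ e = sse x y f} / sst y) =
        pearson x y ^ 2 := by
  have hX := sst_pos hxnc
  have hY := sst_pos hync
  have hle : ∀ f, (1 - pearson x y ^ 2) * sst y ≤ sse x y f := fun f => by
    rw [one_sub_pearson_sq_mul_sst hX hY, sse_eq_sse_affine_of_binary hx01]
    exact sst_sub_sxy_sq_div_le_sse_affine y hX _ _
  have hols : sse x y (olsLine x y) = (1 - pearson x y ^ 2) * sst y := by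
    rw [sse_olsLine y hX, one_sub_pearson_sq_mul_sst hX hY]
  have hR2 : 1 - (1 - pearson x y ^ 2) * sst y / sst y = pearson x y ^ 2 := by
    field_simp
    ring
  have hR2_le : ∀ {P : (ℝ → ℝ) → Prop}, P (fun _ => 0) →
      1 - sInf {e | ∃ f, P f ∧ e = sse x y f} / sst y ≤ pearson x y ^ 2 := fun hP => by
    rw [← hR2]
    gcongr
    exact le_sInf_values_of_forall_le hle hP
  rcases le_total 0 (olsSlope x y) with h | h
  · refine ⟨sInf_values_eq_of_forall_le hle (Or.inl (monotone_olsLine h)) hols, ?_⟩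
    rw [sInf_values_eq_of_forall_le hle (monotone_olsLine h) hols, hR2]
    exact max_eq_left (hR2_le antitone_const)
  · refine ⟨sInf_values_eq_of_forall_le hle (Or.inr (antitone_olsLine h)) hols, ?_⟩
    rw [sInf_values_eq_of_forall_le hle (antitone_olsLine h) hols, hR2]
    exact max_eq_right (hR2_le monotone_const)

/-- For dichotomous items, the minimal SSE over all monotone-in-either-direction
predictors equals `(1 - φ²)·SST(y)`; equivalently, the best monotone-direction isotonic
`R²` equals the squared φ coefficient. -/
theorem dichotomous_isoR2_eq_phi_sq (n : ℕ) (hn : 1 ≤ n) (x y : Fin n → ℝ)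
    (hx01 : ∀ r, x r = 0 ∨ x r = 1) (hy01 : ∀ r, y r = 0 ∨ y r = 1)
    (hxnc : ∃ r s, x r ≠ x s) (hync : ∃ r s, y r ≠ y s) :
    sInf {e : ℝ | ∃ f : ℝ → ℝ, (Monotone f ∨ Antitone f) ∧ e = sse x y f} =
        (1 - pearson x y ^ 2) * sst y ∧
      max (1 - sInf {e : ℝ | ∃ f : ℝ → ℝ, Monotone f ∧ e = sse x y f} / sst y)
          (1 - sInf {e : ℝ | ∃ f : ℝ → ℝ, Antitone f ∧ e = sse x y f} / sst y) =
        pearson x y ^ 2 :=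
  dichotomous_isoR2_eq_phi_sq_general n x y hx01 hxnc hync
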